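/- arXiv:1601.07827 — 8 statements merged into one kernel-verified Lean document; each statement's English description precedes it below -/
import Mathlib

section
/- Any Hom-dialgebra (D, ⊣, ⊢, α) becomes a Hom-Leibniz algebra with bracket [x,y] = x ⊣ y − y ⊢ x. -/
section HomDialgebra

variable {R D : Type*} [CommSemiring R] [AddCommGroup D] [Module R D]
  {dl dr : D →ₗ[R] D →ₗ[R] D} {α : D →ₗ[R] D} {br : D → D → D}

/- After expanding the brackets, `h1` and `h2` turn the two `dl`-terms on the right into those on
the left, `h3` makes the four mixed terms on the right cancel in pairs, and `h4` and `h5` turn the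
two `dr`-terms on the right into those on the left. -/
theorem homLeibniz_of_homDialgebra
    (h1 : ∀ x y z, dl (dl x y) (α z) = dl (α x) (dl y z))
    (h2 : ∀ x y z, dl (α x) (dl y z) = dl (α x) (dr y z))
    (h3 : ∀ x y z, dl (dr x y) (α z) = dr (α x) (dl y z))
    (h4 : ∀ x y z, dr (α x) (dr y z) = dr (dr x y) (α z))
    (h5 : ∀ x y z, dr (dl x y) (α z) = dr (dr x y) (α z))
    (hbr : ∀ x y, br x y = dl x y - dr y x) (x y z : D) :
    br (α x) (br y z) = br (br x y) (α z) - br (br x z) (α y) := by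
  simp only [hbr, map_sub, LinearMap.sub_apply]
  rw [← h1 x y z, ← h2 x z y, ← h1 x z y, h3 y x z, h3 z x y, h4 z y x, h4 y z x, h5 y z x]
  abel

theorem map_bracket_of_homDialgebra
    (hαl : ∀ x y, α (dl x y) = dl (α x) (α y))
    (hαr : ∀ x y, α (dr x y) = dr (α x) (α y))
    (hbr : ∀ x y, br x y = dl x y - dr y x) (x y : D) :
    α (br x y) = br (α x) (α y) := by
  rw [hbr, hbr, map_sub, hαl, hαr]

end HomDialgebra

/-- Any Hom-dialgebra `(D, ⊣, ⊢, α)` becomes a Hom-Leibniz algebra with the bracket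
`[x,y] = x ⊣ y − y ⊢ x`. -/
theorem homDialgebra_to_homLeibniz {𝕜 D : Type*} [Field 𝕜] [AddCommGroup D] [Module 𝕜 D]
    (dl dr : D →ₗ[𝕜] D →ₗ[𝕜] D) (α : D →ₗ[𝕜] D)
    (h1 : ∀ x y z, dl (dl x y) (α z) = dl (α x) (dl y z))
    (h2 : ∀ x y z, dl (α x) (dl y z) = dl (α x) (dr y z))
    (h3 : ∀ x y z, dl (dr x y) (α z) = dr (α x) (dl y z))
    (h4 : ∀ x y z, dr (α x) (dr y z) = dr (dr x y) (α z))
    (h5 : ∀ x y z, dr (dl x y) (α z) = dr (dr x y) (α z))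
    (hαl : ∀ x y, α (dl x y) = dl (α x) (α y))
    (hαr : ∀ x y, α (dr x y) = dr (α x) (α y))
    (br : D → D → D) (hbr : ∀ x y, br x y = dl x y - dr y x) :
    (∀ x y z, br (α x) (br y z) = br (br x y) (α z) - br (br x z) (α y)) ∧
    (∀ x y, α (br x y) = br (α x) (α y)) :=
  ⟨homLeibniz_of_homDialgebra h1 h2 h3 h4 h5 hbr, map_bracket_of_homDialgebra hαl hαr hbr⟩
end

section
/- Let (H,α_H) and (K,α_K) be two-sided Hom-ideals of a Hom-Leibniz algebra (L,α_L) with α_L surjective. Then the commutator [H,K] is a two-sided Hom-ideal of (L,α_L). -/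
/-- A multiplicative Hom-Leibniz algebra structure. -/
def IsHomLeibniz {𝕜 L : Type*} [Field 𝕜] [AddCommGroup L] [Module 𝕜 L]
    (br : L →ₗ[𝕜] L →ₗ[𝕜] L) (α : L →ₗ[𝕜] L) : Prop :=
  (∀ x y z, br (α x) (br y z) = br (br x y) (α z) - br (br x z) (α y)) ∧
  (∀ x y, α (br x y) = br (α x) (α y))

/-- Two-sided Hom-ideal of a Hom-Leibniz algebra. -/
def IsHomIdeal {𝕜 L : Type*} [Field 𝕜] [AddCommGroup L] [Module 𝕜 L]
    (br : L →ₗ[𝕜] L →ₗ[𝕜] L) (α : L →ₗ[𝕜] L) (H : Submodule 𝕜 L) : Prop :=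
  (∀ x ∈ H, α x ∈ H) ∧ (∀ x ∈ H, ∀ y : L, br x y ∈ H ∧ br y x ∈ H)

/-- The commutator of two two-sided Hom-ideals: the subspace spanned by all brackets
`[h,k]` and `[k,h]` with `h ∈ H`, `k ∈ K`. -/
def homCommutator {𝕜 L : Type*} [Field 𝕜] [AddCommGroup L] [Module 𝕜 L]
    (br : L →ₗ[𝕜] L →ₗ[𝕜] L) (H K : Submodule 𝕜 L) : Submodule 𝕜 L :=
  Submodule.span 𝕜 {z : L | ∃ h ∈ H, ∃ k ∈ K, z = br h k ∨ z = br k h}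

/-!
The commutator `[H, K]` is spanned by the brackets `[h, k]` and `[k, h]`, and both `α` and the
brackets with a fixed element are linear, so it suffices to check the ideal conditions on these
generators; by the symmetry `[H, K] = [K, H]` it is enough to treat `[h, k]`. Multiplicativity
gives `α[h, k] = [α h, α k]`. For brackets with `y ∈ L`, surjectivity lets us write `y = α y'`,
and the Hom-Leibniz identity expands `[[h, k], α y']` and `[α y', [h, k]]` into brackets of an
element of `H` with an element of `K`.
-/

section

variable {𝕜 L : Type*} [Field 𝕜] [AddCommGroup L] [Module 𝕜 L]
  {br : L →ₗ[𝕜] L →ₗ[𝕜] L} {α : L →ₗ[𝕜] L} {H K : Submodule 𝕜 L} {a b : L}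

theorem IsHomLeibniz.leibniz (hL : IsHomLeibniz br α) (x y z : L) :
    br (α x) (br y z) = br (br x y) (α z) - br (br x z) (α y) :=
  hL.1 x y z

theorem IsHomLeibniz.map_br (hL : IsHomLeibniz br α) (x y : L) :
    α (br x y) = br (α x) (α y) :=
  hL.2 x y

theorem IsHomIdeal.map_mem (hH : IsHomIdeal br α H) (ha : a ∈ H) : α a ∈ H :=
  hH.1 a ha

theorem IsHomIdeal.br_mem_left (hH : IsHomIdeal br α H) (ha : a ∈ H) (y : L) : br a y ∈ H :=
  (hH.2 a ha y).1

theorem IsHomIdeal.br_mem_right (hH : IsHomIdeal br α H) (ha : a ∈ H) (y : L) : br y a ∈ H :=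
  (hH.2 a ha y).2

theorem isHomIdeal_span_of_forall {s : Set L}
    (hs : ∀ z ∈ s, α z ∈ Submodule.span 𝕜 s ∧
      ∀ y, br z y ∈ Submodule.span 𝕜 s ∧ br y z ∈ Submodule.span 𝕜 s) :
    IsHomIdeal br α (Submodule.span 𝕜 s) := by
  have apply_mem (f : L →ₗ[𝕜] L) (hf : ∀ z ∈ s, f z ∈ Submodule.span 𝕜 s) {x : L}
      (hx : x ∈ Submodule.span 𝕜 s) : f x ∈ Submodule.span 𝕜 s :=
    (Submodule.map_span_le f s _).mpr hf (Submodule.mem_map_of_mem hx)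
  refine ⟨fun x hx => apply_mem α (fun z hz => (hs z hz).1) hx, fun x hx y => ⟨?_, ?_⟩⟩
  · exact apply_mem (br.flip y) (fun z hz => ((hs z hz).2 y).1) hx
  · exact apply_mem (br y) (fun z hz => ((hs z hz).2 y).2) hx

theorem homCommutator_comm (br : L →ₗ[𝕜] L →ₗ[𝕜] L) (H K : Submodule 𝕜 L) :
    homCommutator br H K = homCommutator br K H := by
  unfold homCommutator
  congr 1
  ext z
  constructor <;> rintro ⟨h, hh, k, hk, hz⟩ <;> exact ⟨k, hk, h, hh, hz.symm⟩

theorem br_mem_homCommutator (ha : a ∈ H) (hb : b ∈ K) : br a b ∈ homCommutator br H K :=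
  Submodule.subset_span ⟨a, ha, b, hb, Or.inl rfl⟩

theorem br_mem_homCommutator_swap (hb : b ∈ K) (ha : a ∈ H) : br b a ∈ homCommutator br H K :=
  Submodule.subset_span ⟨a, ha, b, hb, Or.inr rfl⟩

variable (hL : IsHomLeibniz br α) (hH : IsHomIdeal br α H) (hK : IsHomIdeal br α K)
include hL hH hK

theorem map_br_mem_homCommutator (ha : a ∈ H) (hb : b ∈ K) :
    α (br a b) ∈ homCommutator br H K := by
  rw [hL.map_br]
  exact br_mem_homCommutator (hH.map_mem ha) (hK.map_mem hb)

theorem br_br_map_mem_homCommutator (ha : a ∈ H) (hb : b ∈ K) (y : L) :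
    br (br a b) (α y) ∈ homCommutator br H K := by
  have expand : br (br a b) (α y) = br (α a) (br b y) + br (br a y) (α b) := by
    rw [hL.leibniz]
    abel
  rw [expand]
  exact add_mem (br_mem_homCommutator (hH.map_mem ha) (hK.br_mem_left hb y))
    (br_mem_homCommutator (hH.br_mem_left ha y) (hK.map_mem hb))

theorem br_map_br_mem_homCommutator (ha : a ∈ H) (hb : b ∈ K) (y : L) :
    br (α y) (br a b) ∈ homCommutator br H K := by
  rw [hL.leibniz]
  exact sub_mem (br_mem_homCommutator (hH.br_mem_right ha y) (hK.map_mem hb))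
    (br_mem_homCommutator_swap (hK.br_mem_right hb y) (hH.map_mem ha))

theorem homIdeal_conditions_br_of_surjective (hsurj : Function.Surjective α)
    (ha : a ∈ H) (hb : b ∈ K) :
    α (br a b) ∈ homCommutator br H K ∧
      ∀ y, br (br a b) y ∈ homCommutator br H K ∧ br y (br a b) ∈ homCommutator br H K := by
  refine ⟨map_br_mem_homCommutator hL hH hK ha hb, fun y => ?_⟩
  obtain ⟨y, rfl⟩ := hsurj y
  exact ⟨br_br_map_mem_homCommutator hL hH hK ha hb y,
    br_map_br_mem_homCommutator hL hH hK ha hb y⟩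

end

/-- If `α_L` is surjective, the commutator of two two-sided Hom-ideals is a two-sided
Hom-ideal. -/
theorem homCommutator_isHomIdeal_of_surjective {𝕜 L : Type*} [Field 𝕜] [AddCommGroup L]
    [Module 𝕜 L]
    (br : L →ₗ[𝕜] L →ₗ[𝕜] L) (α : L →ₗ[𝕜] L) (hL : IsHomLeibniz br α)
    (hsurj : Function.Surjective α)
    (H K : Submodule 𝕜 L) (hH : IsHomIdeal br α H) (hK : IsHomIdeal br α K) :
    IsHomIdeal br α (homCommutator br H K) := by
  refine isHomIdeal_span_of_forall ?_
  rintro z ⟨a, ha, b, hb, rfl | rfl⟩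
  · exact homIdeal_conditions_br_of_surjective hL hH hK hsurj ha hb
  · have swapped := homIdeal_conditions_br_of_surjective hL hK hH hsurj hb ha
    rwa [homCommutator_comm br K H] at swapped
end

section
/- Let (M,α_M) and (L,α_L) be Hom-Leibniz algebras with a Hom-Leibniz action of (L,α_L) on (M,α_M). Then the semi-direct product M ⋊ L, with underlying space M ⊕ L, endomorphism (m,l) ↦ (α_M(m), α_L(l)), and bracket [(m₁,l₁),(m₂,l₂)] = ([m₁,m₂] + ^{α_L(l₁)}m₂ + m₁^{α_L(l₂)}, [l₁,l₂]), is a multiplicative Hom-Leibniz algebra. -/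
/-- A Hom-Leibniz action of `(L,α_L)` on `(M,α_M)`, with left action `l x m = ^x m` and
right action `r m x = m^x` (axioms (a)–(h) of Definition 2.9). -/
def IsHomLeibnizAction {𝕜 L M : Type*} [Field 𝕜] [AddCommGroup L] [Module 𝕜 L]
    [AddCommGroup M] [Module 𝕜 M]
    (brL : L →ₗ[𝕜] L →ₗ[𝕜] L) (αL : L →ₗ[𝕜] L)
    (brM : M →ₗ[𝕜] M →ₗ[𝕜] M) (αM : M →ₗ[𝕜] M)
    (l : L →ₗ[𝕜] M →ₗ[𝕜] M) (r : M →ₗ[𝕜] L →ₗ[𝕜] M) : Prop :=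
  (∀ x y m, r (αM m) (brL x y) = r (r m x) (αL y) - r (r m y) (αL x)) ∧
  (∀ x y m, l (brL x y) (αM m) = r (l x m) (αL y) - l (αL x) (r m y)) ∧
  (∀ x y m, l (αL x) (l y m) = - l (αL x) (r m y)) ∧
  (∀ x m m', l (αL x) (brM m m') = brM (l x m) (αM m') - brM (l x m') (αM m)) ∧
  (∀ x m m', r (brM m m') (αL x) = brM (r m x) (αM m') + brM (αM m) (r m' x)) ∧
  (∀ x m m', brM (αM m) (l x m') = - brM (αM m) (r m' x)) ∧
  (∀ x m, αM (l x m) = l (αL x) (αM m)) ∧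
  (∀ x m, αM (r m x) = r (αM m) (αL x))

/-! The semi-direct bracket is bilinear by construction, and both Hom-Leibniz axioms are
checked componentwise: the `L`-components are the axioms of `L`, while in the `M`-component each
mixed term of the expanded identity is rewritten by one of the action axioms (a)–(f), resp.
(g)–(h) for multiplicativity, after which what remains cancels in the abelian group `M`. -/

namespace HomLeibniz

section Bracket

variable {𝕜 L M : Type*} [CommRing 𝕜] [AddCommGroup L] [Module 𝕜 L]
  [AddCommGroup M] [Module 𝕜 M]

def semidirectBracket (brL : L →ₗ[𝕜] L →ₗ[𝕜] L) (αL : L →ₗ[𝕜] L)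
    (brM : M →ₗ[𝕜] M →ₗ[𝕜] M) (l : L →ₗ[𝕜] M →ₗ[𝕜] M) (r : M →ₗ[𝕜] L →ₗ[𝕜] M) :
    M × L →ₗ[𝕜] M × L →ₗ[𝕜] M × L :=
  LinearMap.mk₂ 𝕜
    (fun p q => (brM p.1 q.1 + l (αL p.2) q.1 + r p.1 (αL q.2), brL p.2 q.2))
    (fun p p' q => by
      simp only [Prod.fst_add, Prod.snd_add, map_add, LinearMap.add_apply, Prod.mk_add_mk]
      congr 1
      abel)
    (fun c p q => by
      simp only [Prod.smul_fst, Prod.smul_snd, map_smul, LinearMap.smul_apply, smul_add,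
        Prod.smul_mk])
    (fun p q q' => by
      simp only [Prod.fst_add, Prod.snd_add, map_add, Prod.mk_add_mk]
      congr 1
      abel)
    (fun c p q => by
      simp only [Prod.smul_fst, Prod.smul_snd, map_smul, smul_add, Prod.smul_mk])

@[simp]
theorem semidirectBracket_apply (brL : L →ₗ[𝕜] L →ₗ[𝕜] L) (αL : L →ₗ[𝕜] L)
    (brM : M →ₗ[𝕜] M →ₗ[𝕜] M) (l : L →ₗ[𝕜] M →ₗ[𝕜] M) (r : M →ₗ[𝕜] L →ₗ[𝕜] M)
    (p q : M × L) :
    semidirectBracket brL αL brM l r p q =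
      (brM p.1 q.1 + l (αL p.2) q.1 + r p.1 (αL q.2), brL p.2 q.2) :=
  rfl

end Bracket

variable {𝕜 L M : Type*} [Field 𝕜] [AddCommGroup L] [Module 𝕜 L]
  [AddCommGroup M] [Module 𝕜 M]
  {brL : L →ₗ[𝕜] L →ₗ[𝕜] L} {αL : L →ₗ[𝕜] L}
  {brM : M →ₗ[𝕜] M →ₗ[𝕜] M} {αM : M →ₗ[𝕜] M}
  {l : L →ₗ[𝕜] M →ₗ[𝕜] M} {r : M →ₗ[𝕜] L →ₗ[𝕜] M}

theorem semidirectBracket_leibniz (hL : IsHomLeibniz brL αL) (hM : IsHomLeibniz brM αM)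
    (hact : IsHomLeibnizAction brL αL brM αM l r) (p q s : M × L) :
    semidirectBracket brL αL brM l r (αM.prodMap αL p) (semidirectBracket brL αL brM l r q s) =
      semidirectBracket brL αL brM l r (semidirectBracket brL αL brM l r p q)
          (αM.prodMap αL s) -
        semidirectBracket brL αL brM l r (semidirectBracket brL αL brM l r p s)
          (αM.prodMap αL q) := by
  obtain ⟨hLeibL, hmulL⟩ := hL
  obtain ⟨hLeibM, -⟩ := hM
  obtain ⟨ha, hb, hc, hd, he, hf, -, -⟩ := hact
  refine Prod.ext ?_ (hLeibL _ _ _)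
  simp only [semidirectBracket_apply, LinearMap.prodMap_apply, Prod.fst_sub, map_add,
    LinearMap.add_apply, hLeibM, hmulL, ha, hb, hc, hd, he, hf]
  abel

theorem prodMap_semidirectBracket (hL : IsHomLeibniz brL αL) (hM : IsHomLeibniz brM αM)
    (hact : IsHomLeibnizAction brL αL brM αM l r) (p q : M × L) :
    αM.prodMap αL (semidirectBracket brL αL brM l r p q) =
      semidirectBracket brL αL brM l r (αM.prodMap αL p) (αM.prodMap αL q) := by
  obtain ⟨hg, hh⟩ := hact.2.2.2.2.2.2
  simp only [semidirectBracket_apply, LinearMap.prodMap_apply, map_add, hM.2, hL.2, hg, hh]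

theorem isHomLeibniz_semidirectBracket (hL : IsHomLeibniz brL αL) (hM : IsHomLeibniz brM αM)
    (hact : IsHomLeibnizAction brL αL brM αM l r) :
    IsHomLeibniz (semidirectBracket brL αL brM l r) (αM.prodMap αL) :=
  ⟨semidirectBracket_leibniz hL hM hact, prodMap_semidirectBracket hL hM hact⟩

end HomLeibniz

/-- The semi-direct product of Hom-Leibniz algebras: given a Hom-Leibniz action of
`(L,α_L)` on `(M,α_M)`, the space `M ⊕ L` with bracket
`[(m₁,l₁),(m₂,l₂)] = ([m₁,m₂] + ^{α_L l₁}m₂ + m₁^{α_L l₂}, [l₁,l₂])` and endomorphism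
`(m,l) ↦ (α_M m, α_L l)` is a multiplicative Hom-Leibniz algebra (the bracket is
bilinear, satisfies the Hom-Leibniz identity and the endomorphism preserves it). -/
theorem semidirect_product_isHomLeibniz {𝕜 L M : Type*} [Field 𝕜]
    [AddCommGroup L] [Module 𝕜 L] [AddCommGroup M] [Module 𝕜 M]
    (brL : L →ₗ[𝕜] L →ₗ[𝕜] L) (αL : L →ₗ[𝕜] L) (hLb : IsHomLeibniz brL αL)
    (brM : M →ₗ[𝕜] M →ₗ[𝕜] M) (αM : M →ₗ[𝕜] M) (hMb : IsHomLeibniz brM αM)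
    (l : L →ₗ[𝕜] M →ₗ[𝕜] M) (r : M →ₗ[𝕜] L →ₗ[𝕜] M)
    (hact : IsHomLeibnizAction brL αL brM αM l r)
    (sdbr : (M × L) → (M × L) → (M × L))
    (hsdbr : ∀ p q : M × L,
      sdbr p q = (brM p.1 q.1 + l (αL p.2) q.1 + r p.1 (αL q.2), brL p.2 q.2))
    (αsd : (M × L) → (M × L)) (hαsd : ∀ p : M × L, αsd p = (αM p.1, αL p.2)) :
    (∀ p p' q : M × L, sdbr (p + p') q = sdbr p q + sdbr p' q) ∧
    (∀ p q q' : M × L, sdbr p (q + q') = sdbr p q + sdbr p q') ∧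
    (∀ (c : 𝕜) (p q : M × L), sdbr (c • p) q = c • sdbr p q) ∧
    (∀ (c : 𝕜) (p q : M × L), sdbr p (c • q) = c • sdbr p q) ∧
    (∀ p q s : M × L, sdbr (αsd p) (sdbr q s) = sdbr (sdbr p q) (αsd s) - sdbr (sdbr p s) (αsd q)) ∧
    (∀ p q : M × L, αsd (sdbr p q) = sdbr (αsd p) (αsd q)) := by
  obtain rfl : sdbr = fun p q => HomLeibniz.semidirectBracket brL αL brM l r p q :=
    funext₂ fun p q => hsdbr p q
  obtain rfl : αsd = αM.prodMap αL := funext hαsd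
  obtain ⟨hLeib, hmul⟩ := HomLeibniz.isHomLeibniz_semidirectBracket hLb hMb hact
  exact ⟨LinearMap.map_add₂ _, fun p => map_add _, LinearMap.map_smul₂ _,
    fun c p => map_smul _ c, hLeib, hmul⟩
end

section
/- Let 0 → (M,α_M) → (K,α_K) → (L,α_L) → 0 be a split short exact sequence of Hom-Leibniz algebras with splitting s satisfying π∘s = id_L. Then ^x m := i^{-1}[s(x), i(m)] and m^x := i^{-1}[i(m), s(x)] define a Hom-Leibniz action of (L,α_L) on (M,α_M). -/
section HomLeibniz

variable {𝕜 L M L' M' : Type*} [Field 𝕜] [AddCommGroup L] [Module 𝕜 L]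
  [AddCommGroup M] [Module 𝕜 M] [AddCommGroup L'] [Module 𝕜 L'] [AddCommGroup M'] [Module 𝕜 M']

theorem IsHomLeibniz.bracket_bracket_swap {br : L →ₗ[𝕜] L →ₗ[𝕜] L} {α : L →ₗ[𝕜] L}
    (h : IsHomLeibniz br α) (x y z : L) :
    br (α x) (br y z) = -br (α x) (br z y) := by
  rw [h.1 x y z, h.1 x z y]
  abel

theorem IsHomLeibniz.isHomLeibnizAction_self {br : L →ₗ[𝕜] L →ₗ[𝕜] L} {α : L →ₗ[𝕜] L}
    (h : IsHomLeibniz br α) : IsHomLeibnizAction br α br α br br := by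
  refine ⟨fun x y m => h.1 m x y, fun x y m => ?_, fun x y m => h.bracket_bracket_swap x y m,
    fun x m m' => h.1 x m m', fun x m m' => ?_, fun x m m' => h.bracket_bracket_swap m x m',
    fun x m => h.2 x m, fun x m => h.2 m x⟩
  · rw [h.bracket_bracket_swap x m y, h.1 x y m]
    abel
  · rw [h.1 m m' x]
    abel

theorem IsHomLeibnizAction.comap
    {brL : L →ₗ[𝕜] L →ₗ[𝕜] L} {αL : L →ₗ[𝕜] L} {brM : M →ₗ[𝕜] M →ₗ[𝕜] M} {αM : M →ₗ[𝕜] M}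
    {l : L →ₗ[𝕜] M →ₗ[𝕜] M} {r : M →ₗ[𝕜] L →ₗ[𝕜] M}
    {brL' : L' →ₗ[𝕜] L' →ₗ[𝕜] L'} {αL' : L' →ₗ[𝕜] L'}
    {brM' : M' →ₗ[𝕜] M' →ₗ[𝕜] M'} {αM' : M' →ₗ[𝕜] M'}
    {l' : L' →ₗ[𝕜] M' →ₗ[𝕜] M'} {r' : M' →ₗ[𝕜] L' →ₗ[𝕜] M'}
    (h : IsHomLeibnizAction brL' αL' brM' αM' l' r')
    (jL : L →ₗ[𝕜] L') (hjLbr : ∀ x y, jL (brL x y) = brL' (jL x) (jL y))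
    (hjLα : ∀ x, jL (αL x) = αL' (jL x))
    (jM : M →ₗ[𝕜] M') (hjMbr : ∀ m m', jM (brM m m') = brM' (jM m) (jM m'))
    (hjMα : ∀ m, jM (αM m) = αM' (jM m)) (hjM : Function.Injective jM)
    (hl : ∀ x m, jM (l x m) = l' (jL x) (jM m)) (hr : ∀ m x, jM (r m x) = r' (jM m) (jL x)) :
    IsHomLeibnizAction brL αL brM αM l r := by
  obtain ⟨ha, hb, hc, hd, he, hf, hg, hh⟩ := h
  refine ⟨fun x y m => hjM ?_, fun x y m => hjM ?_, fun x y m => hjM ?_, fun x m m' => hjM ?_,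
    fun x m m' => hjM ?_, fun x m m' => hjM ?_, fun x m => hjM ?_, fun x m => hjM ?_⟩ <;>
  simp only [map_add, map_sub, map_neg, hl, hr, hjLbr, hjLα, hjMbr, hjMα]
  exacts [ha _ _ _, hb _ _ _, hc _ _ _, hd _ _ _, he _ _ _, hf _ _ _, hg _ _, hh _ _]

end HomLeibniz

theorem split_exact_induces_action_general {𝕜 L M A : Type*} [Field 𝕜]
    [AddCommGroup L] [Module 𝕜 L] [AddCommGroup M] [Module 𝕜 M]
    [AddCommGroup A] [Module 𝕜 A]
    (brL : L →ₗ[𝕜] L →ₗ[𝕜] L) (αL : L →ₗ[𝕜] L)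
    (brM : M →ₗ[𝕜] M →ₗ[𝕜] M) (αM : M →ₗ[𝕜] M)
    (brA : A →ₗ[𝕜] A →ₗ[𝕜] A) (αA : A →ₗ[𝕜] A) (hAb : IsHomLeibniz brA αA)
    (i : M →ₗ[𝕜] A) (hibr : ∀ m m', i (brM m m') = brA (i m) (i m'))
    (hiα : ∀ m, i (αM m) = αA (i m)) (hiinj : Function.Injective i)
    (π : A →ₗ[𝕜] L) (hπbr : ∀ a b, π (brA a b) = brL (π a) (π b))
    (hexact : LinearMap.range i = LinearMap.ker π)
    (s : L →ₗ[𝕜] A) (hsbr : ∀ x y, s (brL x y) = brA (s x) (s y))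
    (hsα : ∀ x, s (αL x) = αA (s x)) :
    ∃ (l : L →ₗ[𝕜] M →ₗ[𝕜] M) (r : M →ₗ[𝕜] L →ₗ[𝕜] M),
      (∀ x m, i (l x m) = brA (s x) (i m)) ∧
      (∀ x m, i (r m x) = brA (i m) (s x)) ∧
      IsHomLeibnizAction brL αL brM αM l r := by
  have hπi (m : M) : π (i m) = 0 := by
    rw [← LinearMap.mem_ker, ← hexact]
    exact LinearMap.mem_range_self i m
  have hleft (x : L) (m : M) : brA.compl₁₂ s i x m ∈ LinearMap.range i := by
    simp [hexact, hπbr, hπi]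
  have hright (m : M) (x : L) : brA.compl₁₂ i s m x ∈ LinearMap.range i := by
    simp [hexact, hπbr, hπi]
  have hl := LinearMap.codRestrict₂_apply _ i hiinj hleft
  have hr := LinearMap.codRestrict₂_apply _ i hiinj hright
  refine ⟨LinearMap.codRestrict₂ _ i hiinj hleft, LinearMap.codRestrict₂ _ i hiinj hright,
    hl, fun x m => hr m x, hAb.isHomLeibnizAction_self.comap s hsbr hsα i hibr hiα hiinj hl hr⟩

/-- A split short exact sequence `0 → (M,α_M) →ⁱ (K,α_K) →^π (L,α_L) → 0` of Hom-Leibniz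
algebras with splitting `s` induces a Hom-Leibniz action of `(L,α_L)` on `(M,α_M)` by
`^x m = i⁻¹[s x, i m]` and `m^x = i⁻¹[i m, s x]`. -/
theorem split_exact_induces_action {𝕜 L M A : Type*} [Field 𝕜]
    [AddCommGroup L] [Module 𝕜 L] [AddCommGroup M] [Module 𝕜 M]
    [AddCommGroup A] [Module 𝕜 A]
    (brL : L →ₗ[𝕜] L →ₗ[𝕜] L) (αL : L →ₗ[𝕜] L) (hLb : IsHomLeibniz brL αL)
    (brM : M →ₗ[𝕜] M →ₗ[𝕜] M) (αM : M →ₗ[𝕜] M) (hMb : IsHomLeibniz brM αM)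
    (brA : A →ₗ[𝕜] A →ₗ[𝕜] A) (αA : A →ₗ[𝕜] A) (hAb : IsHomLeibniz brA αA)
    (i : M →ₗ[𝕜] A) (hibr : ∀ m m', i (brM m m') = brA (i m) (i m'))
    (hiα : ∀ m, i (αM m) = αA (i m)) (hiinj : Function.Injective i)
    (π : A →ₗ[𝕜] L) (hπbr : ∀ a b, π (brA a b) = brL (π a) (π b))
    (hπα : ∀ a, π (αA a) = αL (π a)) (hπsurj : Function.Surjective π)
    (hexact : LinearMap.range i = LinearMap.ker π)
    (s : L →ₗ[𝕜] A) (hsbr : ∀ x y, s (brL x y) = brA (s x) (s y))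
    (hsα : ∀ x, s (αL x) = αA (s x)) (hsplit : ∀ x, π (s x) = x) :
    ∃ (l : L →ₗ[𝕜] M →ₗ[𝕜] M) (r : M →ₗ[𝕜] L →ₗ[𝕜] M),
      (∀ x m, i (l x m) = brA (s x) (i m)) ∧
      (∀ x m, i (r m x) = brA (i m) (s x)) ∧
      IsHomLeibnizAction brL αL brM αM l r :=
  split_exact_induces_action_general brL αL brM αM brA αA hAb i hibr hiα hiinj π hπbr hexact s hsbr
    hsα
end

section
/- For a Hom-Leibniz algebra (L,α_L) and a trivial Hom-co-representation (M,α_M) (i.e. m^x = ^x m = 0 for all m,x), the first homology HL₁^α(L,M) of the chain complex (M ⊗ L^{⊗•}, d_•) is isomorphic to (M ⊗ L)/(α_M(M) ⊗ [L,L]). In particular, HL₁^α(L,𝕂) ≅ L/[L,L]. -/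
open TensorProduct

def Submodule.quotientComapSubtypeEquivOfEqTop {R V : Type*} [Ring R] [AddCommGroup V]
    [Module R V] {p : Submodule R V} (hp : p = ⊤) (q : Submodule R V) :
    (p ⧸ q.comap p.subtype) ≃ₗ[R] V ⧸ q :=
  Submodule.Quotient.equiv _ _ (LinearEquiv.ofTop p hp) <| by
    change Submodule.map p.subtype _ = q
    rw [Submodule.map_comap_subtype, hp, top_inf_eq]

theorem LinearMap.range_eq_span_tmul_tmul {R M N P Q : Type*} [CommRing R]
    [AddCommGroup M] [Module R M] [AddCommGroup N] [Module R N] [AddCommGroup P] [Module R P]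
    [AddCommGroup Q] [Module R Q] (f : M ⊗[R] (N ⊗[R] P) →ₗ[R] Q) :
    LinearMap.range f = Submodule.span R {t | ∃ m n p, t = f (m ⊗ₜ (n ⊗ₜ p))} := by
  apply le_antisymm
  · rw [← Submodule.ker_mkQ (Submodule.span R _), LinearMap.range_le_ker_iff]
    refine TensorProduct.ext_threefold' fun m n p => ?_
    rw [LinearMap.comp_apply, LinearMap.zero_apply, Submodule.mkQ_apply,
      Submodule.Quotient.mk_eq_zero]
    exact Submodule.subset_span ⟨m, n, p, rfl⟩
  · rw [Submodule.span_le]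
    rintro t ⟨m, n, p, rfl⟩
    exact LinearMap.mem_range_self f _

theorem homLeibniz_first_homology_trivial_coeffs_general {𝕜 L M : Type*} [Field 𝕜]
    [AddCommGroup L] [Module 𝕜 L] [AddCommGroup M] [Module 𝕜 M]
    (br : L →ₗ[𝕜] L →ₗ[𝕜] L)
    (αM : M →ₗ[𝕜] M)
    (d1 : M ⊗[𝕜] L →ₗ[𝕜] M)
    (hd1 : ∀ (m : M) (x : L), d1 (m ⊗ₜ x) = 0)
    (d2 : M ⊗[𝕜] (L ⊗[𝕜] L) →ₗ[𝕜] M ⊗[𝕜] L)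
    (hd2 : ∀ (m : M) (x₁ x₂ : L), d2 (m ⊗ₜ (x₁ ⊗ₜ x₂)) = - (αM m ⊗ₜ br x₁ x₂)) :
    Nonempty
      ((↥(LinearMap.ker d1) ⧸
          (LinearMap.range d2).comap (LinearMap.ker d1).subtype) ≃ₗ[𝕜]
        ((M ⊗[𝕜] L) ⧸
          Submodule.span 𝕜 {t : M ⊗[𝕜] L | ∃ (m : M) (x y : L), t = αM m ⊗ₜ br x y})) := by
  have hker : LinearMap.ker d1 = ⊤ :=
    LinearMap.ker_eq_top.mpr <| TensorProduct.ext' fun m x => hd1 m x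
  have hrange : LinearMap.range d2 =
      Submodule.span 𝕜 {t : M ⊗[𝕜] L | ∃ (m : M) (x y : L), t = αM m ⊗ₜ br x y} := by
    rw [LinearMap.range_eq_span_tmul_tmul, ← Submodule.span_neg]
    congr 1
    ext t
    simp only [hd2, Set.mem_ofPred_eq, Set.mem_neg, neg_eq_iff_eq_neg, neg_neg]
  exact ⟨hrange ▸ Submodule.quotientComapSubtypeEquivOfEqTop hker _⟩

/-- For a trivial Hom-co-representation `(M,α_M)` of a Hom-Leibniz algebra `(L,α_L)`,
the first homology of the Hom-Leibniz chain complex is isomorphic to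
`(M ⊗ L)/(α_M(M) ⊗ [L,L])`. -/
theorem homLeibniz_first_homology_trivial_coeffs {𝕜 L M : Type*} [Field 𝕜]
    [AddCommGroup L] [Module 𝕜 L] [AddCommGroup M] [Module 𝕜 M]
    (br : L →ₗ[𝕜] L →ₗ[𝕜] L) (α : L →ₗ[𝕜] L) (hL : IsHomLeibniz br α)
    (αM : M →ₗ[𝕜] M)
    (d1 : M ⊗[𝕜] L →ₗ[𝕜] M)
    (hd1 : ∀ (m : M) (x : L), d1 (m ⊗ₜ x) = 0)
    (d2 : M ⊗[𝕜] (L ⊗[𝕜] L) →ₗ[𝕜] M ⊗[𝕜] L)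
    (hd2 : ∀ (m : M) (x₁ x₂ : L), d2 (m ⊗ₜ (x₁ ⊗ₜ x₂)) = - (αM m ⊗ₜ br x₁ x₂)) :
    Nonempty
      ((↥(LinearMap.ker d1) ⧸
          (LinearMap.range d2).comap (LinearMap.ker d1).subtype) ≃ₗ[𝕜]
        ((M ⊗[𝕜] L) ⧸
          Submodule.span 𝕜 {t : M ⊗[𝕜] L | ∃ (m : M) (x y : L), t = αM m ⊗ₜ br x y})) :=
  homLeibniz_first_homology_trivial_coeffs_general br αM d1 hd1 d2 hd2
end

section
/- Let (M,α_M) and (N,α_N) be Hom-Leibniz algebras acting compatibly on each other. Then the maps ψ₁: M∗N → M defined by ψ₁(m∗n) = m^n, ψ₁(n∗m) = ^n m, and ψ₂: M∗N → N defined by ψ₂(m∗n) = ^m n, ψ₂(n∗m) = n^m, are homomorphisms of Hom-Leibniz algebras. -/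
section Tensor

variable {𝕜 M N : Type*} [Field 𝕜] [AddCommGroup M] [Module 𝕜 M]
  [AddCommGroup N] [Module 𝕜 N]

/-- The generator `m ∗ n` in the free module on symbols. -/
noncomputable def g1 (𝕜 : Type*) [Field 𝕜] {M N : Type*} [AddCommGroup M] [Module 𝕜 M]
    [AddCommGroup N] [Module 𝕜 N] (m : M) (n : N) : ((M × N) ⊕ (N × M)) →₀ 𝕜 :=
  Finsupp.single (Sum.inl (m, n)) 1

/-- The generator `n ∗ m` in the free module on symbols. -/
noncomputable def g2 (𝕜 : Type*) [Field 𝕜] {M N : Type*} [AddCommGroup M] [Module 𝕜 M]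
    [AddCommGroup N] [Module 𝕜 N] (n : N) (m : M) : ((M × N) ⊕ (N × M)) →₀ 𝕜 :=
  Finsupp.single (Sum.inr (n, m)) 1

/-- The defining relations of the non-abelian Hom-Leibniz tensor product `M ∗ N`:
bilinearity of `∗` in each variable, and the structural relations (1) of the paper.
Here `ml m n = ^m n`, `mr n m = n^m` (action of `M` on `N`) and `nl n m = ^n m`,
`nr m n = m^n` (action of `N` on `M`). -/
def tensorRel (brM : M →ₗ[𝕜] M →ₗ[𝕜] M) (brN : N →ₗ[𝕜] N →ₗ[𝕜] N)
    (αM : M →ₗ[𝕜] M) (αN : N →ₗ[𝕜] N)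
    (ml : M →ₗ[𝕜] N →ₗ[𝕜] N) (mr : N →ₗ[𝕜] M →ₗ[𝕜] N)
    (nl : N →ₗ[𝕜] M →ₗ[𝕜] M) (nr : M →ₗ[𝕜] N →ₗ[𝕜] M) :
    Set (((M × N) ⊕ (N × M)) →₀ 𝕜) :=
  {z |
    (∃ (c : 𝕜) (m : M) (n : N), z = g1 𝕜 (c • m) n - c • g1 𝕜 m n) ∨
    (∃ (c : 𝕜) (m : M) (n : N), z = g1 𝕜 m (c • n) - c • g1 𝕜 m n) ∨
    (∃ (c : 𝕜) (n : N) (m : M), z = g2 𝕜 (c • n) m - c • g2 𝕜 n m) ∨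
    (∃ (c : 𝕜) (n : N) (m : M), z = g2 𝕜 n (c • m) - c • g2 𝕜 n m) ∨
    (∃ (m m' : M) (n : N), z = g1 𝕜 (m + m') n - g1 𝕜 m n - g1 𝕜 m' n) ∨
    (∃ (m : M) (n n' : N), z = g1 𝕜 m (n + n') - g1 𝕜 m n - g1 𝕜 m n') ∨
    (∃ (n n' : N) (m : M), z = g2 𝕜 (n + n') m - g2 𝕜 n m - g2 𝕜 n' m) ∨
    (∃ (n : N) (m m' : M), z = g2 𝕜 n (m + m') - g2 𝕜 n m - g2 𝕜 n m') ∨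
    (∃ (m : M) (n n' : N),
      z = g1 𝕜 (αM m) (brN n n') - g1 𝕜 (nr m n) (αN n') + g1 𝕜 (nr m n') (αN n)) ∨
    (∃ (n : N) (m m' : M),
      z = g2 𝕜 (αN n) (brM m m') - g2 𝕜 (mr n m) (αM m') + g2 𝕜 (mr n m') (αM m)) ∨
    (∃ (m m' : M) (n : N),
      z = g1 𝕜 (brM m m') (αN n) - g2 𝕜 (ml m n) (αM m') + g1 𝕜 (αM m) (mr n m')) ∨
    (∃ (n n' : N) (m : M),
      z = g2 𝕜 (brN n n') (αM m) - g1 𝕜 (nl n m) (αN n') + g2 𝕜 (αN n) (nr m n')) ∨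
    (∃ (m m' : M) (n : N), z = g1 𝕜 (αM m) (ml m' n) + g1 𝕜 (αM m) (mr n m')) ∨
    (∃ (n n' : N) (m : M), z = g2 𝕜 (αN n) (nl n' m) + g2 𝕜 (αN n) (nr m n')) ∨
    (∃ (m m' : M) (n n' : N), z = g1 𝕜 (nr m n) (ml m' n') - g2 𝕜 (ml m n) (nr m' n')) ∨
    (∃ (m m' : M) (n n' : N), z = g1 𝕜 (nr m n) (mr n' m') - g2 𝕜 (ml m n) (nl n' m')) ∨
    (∃ (m m' : M) (n n' : N), z = g1 𝕜 (nl n m) (ml m' n') - g2 𝕜 (mr n m) (nr m' n')) ∨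
    (∃ (m m' : M) (n n' : N), z = g1 𝕜 (nl n m) (mr n' m') - g2 𝕜 (mr n m) (nl n' m'))}

/-- The underlying vector space of the non-abelian Hom-Leibniz tensor product `M ∗ N`. -/
abbrev HomTensor (brM : M →ₗ[𝕜] M →ₗ[𝕜] M) (brN : N →ₗ[𝕜] N →ₗ[𝕜] N)
    (αM : M →ₗ[𝕜] M) (αN : N →ₗ[𝕜] N)
    (ml : M →ₗ[𝕜] N →ₗ[𝕜] N) (mr : N →ₗ[𝕜] M →ₗ[𝕜] N)
    (nl : N →ₗ[𝕜] M →ₗ[𝕜] M) (nr : M →ₗ[𝕜] N →ₗ[𝕜] M) : Type _ :=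
  (((M × N) ⊕ (N × M)) →₀ 𝕜) ⧸ Submodule.span 𝕜 (tensorRel brM brN αM αN ml mr nl nr)

/-- The class of the generator `m ∗ n` in `M ∗ N`. -/
noncomputable def t1 (brM : M →ₗ[𝕜] M →ₗ[𝕜] M) (brN : N →ₗ[𝕜] N →ₗ[𝕜] N)
    (αM : M →ₗ[𝕜] M) (αN : N →ₗ[𝕜] N)
    (ml : M →ₗ[𝕜] N →ₗ[𝕜] N) (mr : N →ₗ[𝕜] M →ₗ[𝕜] N)
    (nl : N →ₗ[𝕜] M →ₗ[𝕜] M) (nr : M →ₗ[𝕜] N →ₗ[𝕜] M)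
    (m : M) (n : N) : HomTensor brM brN αM αN ml mr nl nr :=
  Submodule.Quotient.mk (g1 𝕜 m n)

/-- The class of the generator `n ∗ m` in `M ∗ N`. -/
noncomputable def t2 (brM : M →ₗ[𝕜] M →ₗ[𝕜] M) (brN : N →ₗ[𝕜] N →ₗ[𝕜] N)
    (αM : M →ₗ[𝕜] M) (αN : N →ₗ[𝕜] N)
    (ml : M →ₗ[𝕜] N →ₗ[𝕜] N) (mr : N →ₗ[𝕜] M →ₗ[𝕜] N)
    (nl : N →ₗ[𝕜] M →ₗ[𝕜] M) (nr : M →ₗ[𝕜] N →ₗ[𝕜] M)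
    (n : N) (m : M) : HomTensor brM brN αM αN ml mr nl nr :=
  Submodule.Quotient.mk (g2 𝕜 n m)

/-- Compatibility of mutual Hom-Leibniz actions of `(M,α_M)` and `(N,α_N)`. -/
def CompatibleActions (brM : M →ₗ[𝕜] M →ₗ[𝕜] M) (brN : N →ₗ[𝕜] N →ₗ[𝕜] N)
    (ml : M →ₗ[𝕜] N →ₗ[𝕜] N) (mr : N →ₗ[𝕜] M →ₗ[𝕜] N)
    (nl : N →ₗ[𝕜] M →ₗ[𝕜] M) (nr : M →ₗ[𝕜] N →ₗ[𝕜] M) : Prop :=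
  (∀ (m m' : M) (n : N), nl (ml m n) m' = brM (nr m n) m') ∧
  (∀ (m m' : M) (n : N), nl (mr n m) m' = brM (nl n m) m') ∧
  (∀ (m m' : M) (n : N), nr m (ml m' n) = brM m (nr m' n)) ∧
  (∀ (m m' : M) (n : N), nr m (mr n m') = brM m (nl n m')) ∧
  (∀ (n n' : N) (m : M), ml (nl n m) n' = brN (mr n m) n') ∧
  (∀ (n n' : N) (m : M), ml (nr m n) n' = brN (ml m n) n') ∧
  (∀ (n n' : N) (m : M), mr n (nl n' m) = brN n (mr n' m)) ∧
  (∀ (n n' : N) (m : M), mr n (nr m n') = brN n (ml m n'))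

end Tensor

section Lift

variable {𝕜 M N X : Type*} [Field 𝕜] [AddCommGroup M] [Module 𝕜 M]
  [AddCommGroup N] [Module 𝕜 N] [AddCommGroup X] [Module 𝕜 X]
  {brM : M →ₗ[𝕜] M →ₗ[𝕜] M} {brN : N →ₗ[𝕜] N →ₗ[𝕜] N}
  {αM : M →ₗ[𝕜] M} {αN : N →ₗ[𝕜] N}
  {ml : M →ₗ[𝕜] N →ₗ[𝕜] N} {mr : N →ₗ[𝕜] M →ₗ[𝕜] N}
  {nl : N →ₗ[𝕜] M →ₗ[𝕜] M} {nr : M →ₗ[𝕜] N →ₗ[𝕜] M}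

theorem HomTensor.linearMap_ext {F G : HomTensor brM brN αM αN ml mr nl nr →ₗ[𝕜] X}
    (h1 : ∀ m n, F (t1 brM brN αM αN ml mr nl nr m n) = G (t1 brM brN αM αN ml mr nl nr m n))
    (h2 : ∀ n m, F (t2 brM brN αM αN ml mr nl nr n m) = G (t2 brM brN αM αN ml mr nl nr n m)) :
    F = G := by
  refine Submodule.linearMap_qext _ (Finsupp.lhom_ext' fun i => LinearMap.ext_ring ?_)
  rcases i with ⟨m, n⟩ | ⟨n, m⟩
  exacts [h1 m n, h2 n m]

variable (brM brN αM αN ml mr nl nr) in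
/-- The structural relations of `M ∗ N`, read through `f1 m n = f(m ∗ n)`,
`f2 n m = f(n ∗ m)`. -/
structure RespectsTensorRel (f1 : M →ₗ[𝕜] N →ₗ[𝕜] X) (f2 : N →ₗ[𝕜] M →ₗ[𝕜] X) : Prop where
  alpha_bracketN : ∀ m n n', f1 (αM m) (brN n n') = f1 (nr m n) (αN n') - f1 (nr m n') (αN n)
  alpha_bracketM : ∀ n m m', f2 (αN n) (brM m m') = f2 (mr n m) (αM m') - f2 (mr n m') (αM m)
  bracketM_alpha : ∀ m m' n, f1 (brM m m') (αN n) = f2 (ml m n) (αM m') - f1 (αM m) (mr n m')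
  bracketN_alpha : ∀ n n' m, f2 (brN n n') (αM m) = f1 (nl n m) (αN n') - f2 (αN n) (nr m n')
  alpha_actM : ∀ m m' n, f1 (αM m) (ml m' n) = -f1 (αM m) (mr n m')
  alpha_actN : ∀ n n' m, f2 (αN n) (nl n' m) = -f2 (αN n) (nr m n')
  nr_ml : ∀ m m' n n', f1 (nr m n) (ml m' n') = f2 (ml m n) (nr m' n')
  nr_mr : ∀ m m' n n', f1 (nr m n) (mr n' m') = f2 (ml m n) (nl n' m')
  nl_ml : ∀ m m' n n', f1 (nl n m) (ml m' n') = f2 (mr n m) (nr m' n')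
  nl_mr : ∀ m m' n n', f1 (nl n m) (mr n' m') = f2 (mr n m) (nl n' m')

namespace HomTensor

variable {f1 : M →ₗ[𝕜] N →ₗ[𝕜] X} {f2 : N →ₗ[𝕜] M →ₗ[𝕜] X}

noncomputable def freeLift (f1 : M →ₗ[𝕜] N →ₗ[𝕜] X) (f2 : N →ₗ[𝕜] M →ₗ[𝕜] X) :
    (((M × N) ⊕ (N × M)) →₀ 𝕜) →ₗ[𝕜] X :=
  Finsupp.linearCombination 𝕜 (Sum.elim (fun p => f1 p.1 p.2) (fun p => f2 p.1 p.2))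

theorem freeLift_g1 (m : M) (n : N) : freeLift f1 f2 (g1 𝕜 m n) = f1 m n := by
  simp [freeLift, g1]

theorem freeLift_g2 (n : N) (m : M) : freeLift f1 f2 (g2 𝕜 n m) = f2 n m := by
  simp [freeLift, g2]

theorem span_tensorRel_le_ker_freeLift (h : RespectsTensorRel brM brN αM αN ml mr nl nr f1 f2) :
    Submodule.span 𝕜 (tensorRel brM brN αM αN ml mr nl nr) ≤ LinearMap.ker (freeLift f1 f2) := by
  rw [Submodule.span_le]
  rintro z (⟨c,m,n,rfl⟩|⟨c,m,n,rfl⟩|⟨c,n,m,rfl⟩|⟨c,n,m,rfl⟩|⟨m,m',n,rfl⟩|⟨m,n,n',rfl⟩|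
    ⟨n,n',m,rfl⟩|⟨n,m,m',rfl⟩|⟨m,n,n',rfl⟩|⟨n,m,m',rfl⟩|⟨m,m',n,rfl⟩|⟨n,n',m,rfl⟩|
    ⟨m,m',n,rfl⟩|⟨n,n',m,rfl⟩|⟨m,m',n,n',rfl⟩|⟨m,m',n,n',rfl⟩|⟨m,m',n,n',rfl⟩|⟨m,m',n,n',rfl⟩) <;>
  simp only [SetLike.mem_coe, LinearMap.mem_ker, map_sub, map_add, map_smul, freeLift_g1,
    freeLift_g2, LinearMap.smul_apply, LinearMap.add_apply, h.alpha_bracketN,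
    h.alpha_bracketM, h.bracketM_alpha, h.bracketN_alpha, h.alpha_actM, h.alpha_actN, h.nr_ml,
    h.nr_mr, h.nl_ml, h.nl_mr] <;>
  abel

noncomputable def lift (h : RespectsTensorRel brM brN αM αN ml mr nl nr f1 f2) :
    HomTensor brM brN αM αN ml mr nl nr →ₗ[𝕜] X :=
  Submodule.liftQ _ (freeLift f1 f2) (span_tensorRel_le_ker_freeLift h)

variable (h : RespectsTensorRel brM brN αM αN ml mr nl nr f1 f2)

@[simp]
theorem lift_t1 (m : M) (n : N) : lift h (t1 brM brN αM αN ml mr nl nr m n) = f1 m n :=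
  freeLift_g1 m n

@[simp]
theorem lift_t2 (n : N) (m : M) : lift h (t2 brM brN αM αN ml mr nl nr n m) = f2 n m :=
  freeLift_g2 n m

variable {L : Type*} [AddCommGroup L] [Module 𝕜 L]
  {ψ : HomTensor brM brN αM αN ml mr nl nr →ₗ[𝕜] L}

theorem map_bracket_of_generators {Br : HomTensor brM brN αM αN ml mr nl nr →ₗ[𝕜]
      HomTensor brM brN αM αN ml mr nl nr →ₗ[𝕜] HomTensor brM brN αM αN ml mr nl nr}
    {brL : L →ₗ[𝕜] L →ₗ[𝕜] L}
    (h11 : ∀ m n m' n', ψ (Br (t1 brM brN αM αN ml mr nl nr m n)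
      (t1 brM brN αM αN ml mr nl nr m' n')) = brL (ψ (t1 brM brN αM αN ml mr nl nr m n))
        (ψ (t1 brM brN αM αN ml mr nl nr m' n')))
    (h12 : ∀ m n n' m', ψ (Br (t1 brM brN αM αN ml mr nl nr m n)
      (t2 brM brN αM αN ml mr nl nr n' m')) = brL (ψ (t1 brM brN αM αN ml mr nl nr m n))
        (ψ (t2 brM brN αM αN ml mr nl nr n' m')))
    (h21 : ∀ n m m' n', ψ (Br (t2 brM brN αM αN ml mr nl nr n m)
      (t1 brM brN αM αN ml mr nl nr m' n')) = brL (ψ (t2 brM brN αM αN ml mr nl nr n m))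
        (ψ (t1 brM brN αM αN ml mr nl nr m' n')))
    (h22 : ∀ n m n' m', ψ (Br (t2 brM brN αM αN ml mr nl nr n m)
      (t2 brM brN αM αN ml mr nl nr n' m')) = brL (ψ (t2 brM brN αM αN ml mr nl nr n m))
        (ψ (t2 brM brN αM αN ml mr nl nr n' m')))
    (a b : HomTensor brM brN αM αN ml mr nl nr) : ψ (Br a b) = brL (ψ a) (ψ b) := by
  have hψ : Br.compr₂ ψ = brL.compl₁₂ ψ ψ :=
    linearMap_ext (fun m n => linearMap_ext (h11 m n) (h12 m n))
      (fun n m => linearMap_ext (h21 n m) (h22 n m))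
  exact LinearMap.congr_fun₂ hψ a b

theorem map_comp_of_generators
    {αT : HomTensor brM brN αM αN ml mr nl nr →ₗ[𝕜] HomTensor brM brN αM αN ml mr nl nr}
    {αL : L →ₗ[𝕜] L}
    (h1 : ∀ m n, ψ (αT (t1 brM brN αM αN ml mr nl nr m n)) =
      αL (ψ (t1 brM brN αM αN ml mr nl nr m n)))
    (h2 : ∀ n m, ψ (αT (t2 brM brN αM αN ml mr nl nr n m)) =
      αL (ψ (t2 brM brN αM αN ml mr nl nr n m)))
    (a : HomTensor brM brN αM αN ml mr nl nr) : ψ (αT a) = αL (ψ a) :=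
  LinearMap.congr_fun (linearMap_ext (F := ψ ∘ₗ αT) (G := αL ∘ₗ ψ) h1 h2) a

end HomTensor

end Lift

namespace CompatibleActions

variable {𝕜 M N : Type*} [Field 𝕜] [AddCommGroup M] [Module 𝕜 M]
  [AddCommGroup N] [Module 𝕜 N]
  {brM : M →ₗ[𝕜] M →ₗ[𝕜] M} {brN : N →ₗ[𝕜] N →ₗ[𝕜] N}
  {αM : M →ₗ[𝕜] M} {αN : N →ₗ[𝕜] N}
  {ml : M →ₗ[𝕜] N →ₗ[𝕜] N} {mr : N →ₗ[𝕜] M →ₗ[𝕜] N}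
  {nl : N →ₗ[𝕜] M →ₗ[𝕜] M} {nr : M →ₗ[𝕜] N →ₗ[𝕜] M}

theorem respectsTensorRel_nr_nl (hcomp : CompatibleActions brM brN ml mr nl nr)
    (hact : IsHomLeibnizAction brN αN brM αM nl nr) :
    RespectsTensorRel brM brN αM αN ml mr nl nr nr nl := by
  obtain ⟨h1, h2, h3, h4, h5, h6, -, -⟩ := hact
  obtain ⟨c1, c2, c3, c4, -, -, -, -⟩ := hcomp
  refine ⟨fun m n n' => h1 n n' m, fun n m m' => ?_, fun m m' n => ?_, fun n n' m => h2 n n' m,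
    fun m m' n => ?_, fun n n' m => h3 n n' m, fun m m' n n' => ?_, fun m m' n n' => ?_,
    fun m m' n n' => ?_, fun m m' n n' => ?_⟩
  · rw [h4, c2, c2]
  · rw [h5, c1, c4, h6]; abel
  · rw [c3, c4, h6, neg_neg]
  · rw [c3, c1]
  · rw [c4, c1]
  · rw [c3, c2]
  · rw [c4, c2]

theorem respectsTensorRel_ml_mr (hcomp : CompatibleActions brM brN ml mr nl nr)
    (hact : IsHomLeibnizAction brM αM brN αN ml mr) :
    RespectsTensorRel brM brN αM αN ml mr nl nr ml mr := by
  obtain ⟨h1, h2, h3, h4, h5, h6, -, -⟩ := hact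
  obtain ⟨-, -, -, -, c5, c6, c7, c8⟩ := hcomp
  refine ⟨fun m n n' => ?_, fun n m m' => h1 m m' n, fun m m' n => h2 m m' n, fun n n' m => ?_,
    fun m m' n => h3 m m' n, fun n n' m => ?_, fun m m' n n' => ?_, fun m m' n n' => ?_,
    fun m m' n n' => ?_, fun m m' n n' => ?_⟩
  · rw [h4, c6, c6]
  · rw [h5, c5, c8, h6]; abel
  · rw [c7, c8, h6, neg_neg]
  · rw [c6, c8]
  · rw [c6, c7]
  · rw [c5, c8]
  · rw [c5, c7]

end CompatibleActions

theorem psi_one_psi_two_homomorphisms_general {𝕜 M N : Type*} [Field 𝕜]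
    [AddCommGroup M] [Module 𝕜 M] [AddCommGroup N] [Module 𝕜 N]
    (brM : M →ₗ[𝕜] M →ₗ[𝕜] M) (αM : M →ₗ[𝕜] M)
    (brN : N →ₗ[𝕜] N →ₗ[𝕜] N) (αN : N →ₗ[𝕜] N)
    (ml : M →ₗ[𝕜] N →ₗ[𝕜] N) (mr : N →ₗ[𝕜] M →ₗ[𝕜] N)
    (nl : N →ₗ[𝕜] M →ₗ[𝕜] M) (nr : M →ₗ[𝕜] N →ₗ[𝕜] M)
    (hactM : IsHomLeibnizAction brM αM brN αN ml mr)
    (hactN : IsHomLeibnizAction brN αN brM αM nl nr)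
    (hcomp : CompatibleActions brM brN ml mr nl nr)
    (Br : HomTensor brM brN αM αN ml mr nl nr →ₗ[𝕜]
      HomTensor brM brN αM αN ml mr nl nr →ₗ[𝕜] HomTensor brM brN αM αN ml mr nl nr)
    (hBr1 : ∀ m n m' n', Br (t1 brM brN αM αN ml mr nl nr m n)
      (t1 brM brN αM αN ml mr nl nr m' n') = t1 brM brN αM αN ml mr nl nr (nr m n) (ml m' n'))
    (hBr2 : ∀ m n n' m', Br (t1 brM brN αM αN ml mr nl nr m n)
      (t2 brM brN αM αN ml mr nl nr n' m') = t1 brM brN αM αN ml mr nl nr (nr m n) (mr n' m'))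
    (hBr3 : ∀ n m m' n', Br (t2 brM brN αM αN ml mr nl nr n m)
      (t1 brM brN αM αN ml mr nl nr m' n') = t1 brM brN αM αN ml mr nl nr (nl n m) (ml m' n'))
    (hBr4 : ∀ n m n' m', Br (t2 brM brN αM αN ml mr nl nr n m)
      (t2 brM brN αM αN ml mr nl nr n' m') = t1 brM brN αM αN ml mr nl nr (nl n m) (mr n' m'))
    (αT : HomTensor brM brN αM αN ml mr nl nr →ₗ[𝕜] HomTensor brM brN αM αN ml mr nl nr)
    (hαT1 : ∀ m n, αT (t1 brM brN αM αN ml mr nl nr m n) =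
      t1 brM brN αM αN ml mr nl nr (αM m) (αN n))
    (hαT2 : ∀ n m, αT (t2 brM brN αM αN ml mr nl nr n m) =
      t2 brM brN αM αN ml mr nl nr (αN n) (αM m)) :
    (∃ ψ₁ : HomTensor brM brN αM αN ml mr nl nr →ₗ[𝕜] M,
      (∀ m n, ψ₁ (t1 brM brN αM αN ml mr nl nr m n) = nr m n) ∧
      (∀ n m, ψ₁ (t2 brM brN αM αN ml mr nl nr n m) = nl n m) ∧
      (∀ a b, ψ₁ (Br a b) = brM (ψ₁ a) (ψ₁ b)) ∧
      (∀ a, ψ₁ (αT a) = αM (ψ₁ a))) ∧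
    (∃ ψ₂ : HomTensor brM brN αM αN ml mr nl nr →ₗ[𝕜] N,
      (∀ m n, ψ₂ (t1 brM brN αM αN ml mr nl nr m n) = ml m n) ∧
      (∀ n m, ψ₂ (t2 brM brN αM αN ml mr nl nr n m) = mr n m) ∧
      (∀ a b, ψ₂ (Br a b) = brN (ψ₂ a) (ψ₂ b)) ∧
      (∀ a, ψ₂ (αT a) = αN (ψ₂ a))) := by
  have hψ₁ := hcomp.respectsTensorRel_nr_nl hactN
  have hψ₂ := hcomp.respectsTensorRel_ml_mr hactM
  obtain ⟨-, -, -, -, -, -, hαM_ml, hαM_mr⟩ := hactM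
  obtain ⟨-, -, -, -, -, -, hαN_nl, hαN_nr⟩ := hactN
  obtain ⟨-, -, c3, c4, c5, c6, -, -⟩ := hcomp
  refine ⟨⟨HomTensor.lift hψ₁, HomTensor.lift_t1 hψ₁, HomTensor.lift_t2 hψ₁, ?_, ?_⟩,
    ⟨HomTensor.lift hψ₂, HomTensor.lift_t1 hψ₂, HomTensor.lift_t2 hψ₂, ?_, ?_⟩⟩
  · exact HomTensor.map_bracket_of_generators (by simp [hBr1, c3]) (by simp [hBr2, c4])
      (by simp [hBr3, c3]) (by simp [hBr4, c4])
  · exact HomTensor.map_comp_of_generators (by simp [hαT1, hαN_nr]) (by simp [hαT2, hαN_nl])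
  · exact HomTensor.map_bracket_of_generators (by simp [hBr1, c6]) (by simp [hBr2, c6])
      (by simp [hBr3, c5]) (by simp [hBr4, c5])
  · exact HomTensor.map_comp_of_generators (by simp [hαT1, hαM_ml]) (by simp [hαT2, hαM_mr])

/-- For Hom-Leibniz algebras `(M,α_M)`, `(N,α_N)` acting compatibly on each other, the maps
`ψ₁ : M∗N → M`, `ψ₁(m∗n) = m^n`, `ψ₁(n∗m) = ^n m` and `ψ₂ : M∗N → N`, `ψ₂(m∗n) = ^m n`,
`ψ₂(n∗m) = n^m` are (well-defined) homomorphisms of Hom-Leibniz algebras. -/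
theorem psi_one_psi_two_homomorphisms {𝕜 M N : Type*} [Field 𝕜]
    [AddCommGroup M] [Module 𝕜 M] [AddCommGroup N] [Module 𝕜 N]
    (brM : M →ₗ[𝕜] M →ₗ[𝕜] M) (αM : M →ₗ[𝕜] M) (hM : IsHomLeibniz brM αM)
    (brN : N →ₗ[𝕜] N →ₗ[𝕜] N) (αN : N →ₗ[𝕜] N) (hN : IsHomLeibniz brN αN)
    (ml : M →ₗ[𝕜] N →ₗ[𝕜] N) (mr : N →ₗ[𝕜] M →ₗ[𝕜] N)
    (nl : N →ₗ[𝕜] M →ₗ[𝕜] M) (nr : M →ₗ[𝕜] N →ₗ[𝕜] M)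
    (hactM : IsHomLeibnizAction brM αM brN αN ml mr)
    (hactN : IsHomLeibnizAction brN αN brM αM nl nr)
    (hcomp : CompatibleActions brM brN ml mr nl nr)
    (Br : HomTensor brM brN αM αN ml mr nl nr →ₗ[𝕜]
      HomTensor brM brN αM αN ml mr nl nr →ₗ[𝕜] HomTensor brM brN αM αN ml mr nl nr)
    (hBr1 : ∀ m n m' n', Br (t1 brM brN αM αN ml mr nl nr m n)
      (t1 brM brN αM αN ml mr nl nr m' n') = t1 brM brN αM αN ml mr nl nr (nr m n) (ml m' n'))
    (hBr2 : ∀ m n n' m', Br (t1 brM brN αM αN ml mr nl nr m n)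
      (t2 brM brN αM αN ml mr nl nr n' m') = t1 brM brN αM αN ml mr nl nr (nr m n) (mr n' m'))
    (hBr3 : ∀ n m m' n', Br (t2 brM brN αM αN ml mr nl nr n m)
      (t1 brM brN αM αN ml mr nl nr m' n') = t1 brM brN αM αN ml mr nl nr (nl n m) (ml m' n'))
    (hBr4 : ∀ n m n' m', Br (t2 brM brN αM αN ml mr nl nr n m)
      (t2 brM brN αM αN ml mr nl nr n' m') = t1 brM brN αM αN ml mr nl nr (nl n m) (mr n' m'))
    (αT : HomTensor brM brN αM αN ml mr nl nr →ₗ[𝕜] HomTensor brM brN αM αN ml mr nl nr)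
    (hαT1 : ∀ m n, αT (t1 brM brN αM αN ml mr nl nr m n) =
      t1 brM brN αM αN ml mr nl nr (αM m) (αN n))
    (hαT2 : ∀ n m, αT (t2 brM brN αM αN ml mr nl nr n m) =
      t2 brM brN αM αN ml mr nl nr (αN n) (αM m)) :
    (∃ ψ₁ : HomTensor brM brN αM αN ml mr nl nr →ₗ[𝕜] M,
      (∀ m n, ψ₁ (t1 brM brN αM αN ml mr nl nr m n) = nr m n) ∧
      (∀ n m, ψ₁ (t2 brM brN αM αN ml mr nl nr n m) = nl n m) ∧
      (∀ a b, ψ₁ (Br a b) = brM (ψ₁ a) (ψ₁ b)) ∧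
      (∀ a, ψ₁ (αT a) = αM (ψ₁ a))) ∧
    (∃ ψ₂ : HomTensor brM brN αM αN ml mr nl nr →ₗ[𝕜] N,
      (∀ m n, ψ₂ (t1 brM brN αM αN ml mr nl nr m n) = ml m n) ∧
      (∀ n m, ψ₂ (t2 brM brN αM αN ml mr nl nr n m) = mr n m) ∧
      (∀ a b, ψ₂ (Br a b) = brN (ψ₂ a) (ψ₂ b)) ∧
      (∀ a, ψ₂ (αT a) = αN (ψ₂ a))) :=
  psi_one_psi_two_homomorphisms_general brM αM brN αN ml mr nl nr hactM hactN hcomp Br hBr1 hBr2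
    hBr3 hBr4 αT hαT1 hαT2
end

section
/- For Hom-Leibniz algebras (M,α_M), (N,α_N) acting compatibly on each other, the kernels Ker(ψ₁) and Ker(ψ₂) of the homomorphisms ψ₁: M∗N → M and ψ₂: M∗N → N are contained in the center of the non-abelian tensor product (M∗N, α_{M∗N}). -/
/-! On generators the bracket is `[m ∗ n, m' ∗ n'] = m^n ∗ ^{m'}n' = ψ₁(m ∗ n) ∗ ψ₂(m' ∗ n')`, and
the last four defining relations of `M ∗ N` rewrite this generator as `ψ₂(m ∗ n) ∗ ψ₁(m' ∗ n')`
(a generator of the form `n ∗ m`), and likewise for the other three kinds of pairs. Since both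
sides are bilinear, `[z, w] = ψ₁ z ∗ ψ₂ w = ψ₂ z ∗ ψ₁ w` for all `z, w`, so the bracket vanishes as
soon as one argument lies in `Ker ψ₁` or in `Ker ψ₂`. -/

namespace HomTensor

variable {𝕜 M N : Type*} [Field 𝕜] [AddCommGroup M] [Module 𝕜 M]
  [AddCommGroup N] [Module 𝕜 N]
  {brM : M →ₗ[𝕜] M →ₗ[𝕜] M} {brN : N →ₗ[𝕜] N →ₗ[𝕜] N}
  {αM : M →ₗ[𝕜] M} {αN : N →ₗ[𝕜] N}
  {ml : M →ₗ[𝕜] N →ₗ[𝕜] N} {mr : N →ₗ[𝕜] M →ₗ[𝕜] N}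
  {nl : N →ₗ[𝕜] M →ₗ[𝕜] M} {nr : M →ₗ[𝕜] N →ₗ[𝕜] M}

local notation "𝕋" => HomTensor brM brN αM αN ml mr nl nr
local notation "t₁" => t1 brM brN αM αN ml mr nl nr
local notation "t₂" => t2 brM brN αM αN ml mr nl nr

theorem mk_eq_zero_of_mem {x : ((M × N) ⊕ (N × M)) →₀ 𝕜}
    (h : x ∈ tensorRel brM brN αM αN ml mr nl nr) :
    (Submodule.Quotient.mk x : 𝕋) = 0 :=
  (Submodule.Quotient.mk_eq_zero _).2 (Submodule.subset_span h)

theorem t1_smul_left (c : 𝕜) (m : M) (n : N) : t₁ (c • m) n = c • t₁ m n :=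
  sub_eq_zero.1 <| mk_eq_zero_of_mem <| Or.inl ⟨c, m, n, rfl⟩

theorem t1_smul_right (c : 𝕜) (m : M) (n : N) : t₁ m (c • n) = c • t₁ m n :=
  sub_eq_zero.1 <| mk_eq_zero_of_mem <| by
    right
    exact Or.inl ⟨c, m, n, rfl⟩

theorem t2_smul_left (c : 𝕜) (n : N) (m : M) : t₂ (c • n) m = c • t₂ n m :=
  sub_eq_zero.1 <| mk_eq_zero_of_mem <| by
    iterate 2 right
    exact Or.inl ⟨c, n, m, rfl⟩

theorem t2_smul_right (c : 𝕜) (n : N) (m : M) : t₂ n (c • m) = c • t₂ n m :=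
  sub_eq_zero.1 <| mk_eq_zero_of_mem <| by
    iterate 3 right
    exact Or.inl ⟨c, n, m, rfl⟩

theorem t1_add_left (m m' : M) (n : N) : t₁ (m + m') n = t₁ m n + t₁ m' n := by
  rw [← sub_eq_zero, ← sub_sub]
  refine mk_eq_zero_of_mem ?_
  iterate 4 right
  exact Or.inl ⟨m, m', n, rfl⟩

theorem t1_add_right (m : M) (n n' : N) : t₁ m (n + n') = t₁ m n + t₁ m n' := by
  rw [← sub_eq_zero, ← sub_sub]
  refine mk_eq_zero_of_mem ?_
  iterate 5 right
  exact Or.inl ⟨m, n, n', rfl⟩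

theorem t2_add_left (n n' : N) (m : M) : t₂ (n + n') m = t₂ n m + t₂ n' m := by
  rw [← sub_eq_zero, ← sub_sub]
  refine mk_eq_zero_of_mem ?_
  iterate 6 right
  exact Or.inl ⟨n, n', m, rfl⟩

theorem t2_add_right (n : N) (m m' : M) : t₂ n (m + m') = t₂ n m + t₂ n m' := by
  rw [← sub_eq_zero, ← sub_sub]
  refine mk_eq_zero_of_mem ?_
  iterate 7 right
  exact Or.inl ⟨n, m, m', rfl⟩

theorem t1_nr_ml (m m' : M) (n n' : N) : t₁ (nr m n) (ml m' n') = t₂ (ml m n) (nr m' n') :=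
  sub_eq_zero.1 <| mk_eq_zero_of_mem <| by
    iterate 14 right
    exact Or.inl ⟨m, m', n, n', rfl⟩

theorem t1_nr_mr (m m' : M) (n n' : N) : t₁ (nr m n) (mr n' m') = t₂ (ml m n) (nl n' m') :=
  sub_eq_zero.1 <| mk_eq_zero_of_mem <| by
    iterate 15 right
    exact Or.inl ⟨m, m', n, n', rfl⟩

theorem t1_nl_ml (m m' : M) (n n' : N) : t₁ (nl n m) (ml m' n') = t₂ (mr n m) (nr m' n') :=
  sub_eq_zero.1 <| mk_eq_zero_of_mem <| by
    iterate 16 right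
    exact Or.inl ⟨m, m', n, n', rfl⟩

theorem t1_nl_mr (m m' : M) (n n' : N) : t₁ (nl n m) (mr n' m') = t₂ (mr n m) (nl n' m') :=
  sub_eq_zero.1 <| mk_eq_zero_of_mem <| by
    iterate 17 right
    exact ⟨m, m', n, n', rfl⟩

variable (brM brN αM αN ml mr nl nr) in
noncomputable def tmul₁ : M →ₗ[𝕜] N →ₗ[𝕜] 𝕋 :=
  LinearMap.mk₂ 𝕜 t₁ t1_add_left t1_smul_left t1_add_right t1_smul_right

variable (brM brN αM αN ml mr nl nr) in
noncomputable def tmul₂ : N →ₗ[𝕜] M →ₗ[𝕜] 𝕋 :=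
  LinearMap.mk₂ 𝕜 t₂ t2_add_left t2_smul_left t2_add_right t2_smul_right

@[simp]
theorem tmul₁_apply (m : M) (n : N) : tmul₁ brM brN αM αN ml mr nl nr m n = t₁ m n := rfl

@[simp]
theorem tmul₂_apply (n : N) (m : M) : tmul₂ brM brN αM αN ml mr nl nr n m = t₂ n m := rfl

theorem t1_zero_left (n : N) : t₁ 0 n = 0 := (tmul₁ brM brN αM αN ml mr nl nr).map_zero₂ n

theorem t1_zero_right (m : M) : t₁ m 0 = 0 := (tmul₁ brM brN αM αN ml mr nl nr m).map_zero

theorem t2_zero_left (m : M) : t₂ 0 m = 0 := (tmul₂ brM brN αM αN ml mr nl nr).map_zero₂ m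

theorem t2_zero_right (n : N) : t₂ n 0 = 0 := (tmul₂ brM brN αM αN ml mr nl nr n).map_zero

theorem linearMap_ext_s17 {P : Type*} [AddCommGroup P] [Module 𝕜 P] {f g : 𝕋 →ₗ[𝕜] P}
    (h₁ : ∀ m n, f (t₁ m n) = g (t₁ m n)) (h₂ : ∀ n m, f (t₂ n m) = g (t₂ n m)) : f = g := by
  refine Submodule.linearMap_qext _ (Finsupp.lhom_ext' fun a => LinearMap.ext_ring ?_)
  rcases a with ⟨m, n⟩ | ⟨n, m⟩
  exacts [h₁ m n, h₂ n m]

theorem linearMap_ext₂ {P : Type*} [AddCommGroup P] [Module 𝕜 P] {f g : 𝕋 →ₗ[𝕜] 𝕋 →ₗ[𝕜] P}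
    (h₁₁ : ∀ m n m' n', f (t₁ m n) (t₁ m' n') = g (t₁ m n) (t₁ m' n'))
    (h₁₂ : ∀ m n n' m', f (t₁ m n) (t₂ n' m') = g (t₁ m n) (t₂ n' m'))
    (h₂₁ : ∀ n m m' n', f (t₂ n m) (t₁ m' n') = g (t₂ n m) (t₁ m' n'))
    (h₂₂ : ∀ n m n' m', f (t₂ n m) (t₂ n' m') = g (t₂ n m) (t₂ n' m')) : f = g :=
  linearMap_ext_s17 (fun m n => linearMap_ext_s17 (h₁₁ m n) (h₁₂ m n))
    (fun n m => linearMap_ext_s17 (h₂₁ n m) (h₂₂ n m))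

theorem bracket_eq_t1_psi₁_psi₂ (Br : 𝕋 →ₗ[𝕜] 𝕋 →ₗ[𝕜] 𝕋) (ψ₁ : 𝕋 →ₗ[𝕜] M) (ψ₂ : 𝕋 →ₗ[𝕜] N)
    (hBr1 : ∀ (m : M) (n : N) (m' : M) (n' : N),
      Br (t₁ m n) (t₁ m' n') = t₁ (nr m n) (ml m' n'))
    (hBr2 : ∀ (m : M) (n n' : N) (m' : M), Br (t₁ m n) (t₂ n' m') = t₁ (nr m n) (mr n' m'))
    (hBr3 : ∀ (n : N) (m m' : M) (n' : N), Br (t₂ n m) (t₁ m' n') = t₁ (nl n m) (ml m' n'))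
    (hBr4 : ∀ (n : N) (m : M) (n' : N) (m' : M),
      Br (t₂ n m) (t₂ n' m') = t₁ (nl n m) (mr n' m'))
    (hψ₁1 : ∀ m n, ψ₁ (t₁ m n) = nr m n) (hψ₁2 : ∀ n m, ψ₁ (t₂ n m) = nl n m)
    (hψ₂1 : ∀ m n, ψ₂ (t₁ m n) = ml m n) (hψ₂2 : ∀ n m, ψ₂ (t₂ n m) = mr n m) (z w : 𝕋) :
    Br z w = t₁ (ψ₁ z) (ψ₂ w) := by
  have hBr : Br = ((tmul₁ brM brN αM αN ml mr nl nr).comp ψ₁).compl₂ ψ₂ :=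
    linearMap_ext₂ (by simp [hBr1, hψ₁1, hψ₂1]) (by simp [hBr2, hψ₁1, hψ₂2])
      (by simp [hBr3, hψ₁2, hψ₂1]) (by simp [hBr4, hψ₁2, hψ₂2])
  exact LinearMap.congr_fun₂ hBr z w

theorem bracket_eq_t2_psi₂_psi₁ (Br : 𝕋 →ₗ[𝕜] 𝕋 →ₗ[𝕜] 𝕋) (ψ₁ : 𝕋 →ₗ[𝕜] M) (ψ₂ : 𝕋 →ₗ[𝕜] N)
    (hBr1 : ∀ (m : M) (n : N) (m' : M) (n' : N),
      Br (t₁ m n) (t₁ m' n') = t₁ (nr m n) (ml m' n'))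
    (hBr2 : ∀ (m : M) (n n' : N) (m' : M), Br (t₁ m n) (t₂ n' m') = t₁ (nr m n) (mr n' m'))
    (hBr3 : ∀ (n : N) (m m' : M) (n' : N), Br (t₂ n m) (t₁ m' n') = t₁ (nl n m) (ml m' n'))
    (hBr4 : ∀ (n : N) (m : M) (n' : N) (m' : M),
      Br (t₂ n m) (t₂ n' m') = t₁ (nl n m) (mr n' m'))
    (hψ₁1 : ∀ m n, ψ₁ (t₁ m n) = nr m n) (hψ₁2 : ∀ n m, ψ₁ (t₂ n m) = nl n m)
    (hψ₂1 : ∀ m n, ψ₂ (t₁ m n) = ml m n) (hψ₂2 : ∀ n m, ψ₂ (t₂ n m) = mr n m) (z w : 𝕋) :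
    Br z w = t₂ (ψ₂ z) (ψ₁ w) := by
  have hBr : Br = ((tmul₂ brM brN αM αN ml mr nl nr).comp ψ₂).compl₂ ψ₁ :=
    linearMap_ext₂ (by simp [hBr1, hψ₁1, hψ₂1, t1_nr_ml]) (by simp [hBr2, hψ₁2, hψ₂1, t1_nr_mr])
      (by simp [hBr3, hψ₁1, hψ₂2, t1_nl_ml]) (by simp [hBr4, hψ₁2, hψ₂2, t1_nl_mr])
  exact LinearMap.congr_fun₂ hBr z w

end HomTensor

theorem ker_psi_central_general {𝕜 M N : Type*} [Field 𝕜]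
    [AddCommGroup M] [Module 𝕜 M] [AddCommGroup N] [Module 𝕜 N]
    (brM : M →ₗ[𝕜] M →ₗ[𝕜] M) (αM : M →ₗ[𝕜] M)
    (brN : N →ₗ[𝕜] N →ₗ[𝕜] N) (αN : N →ₗ[𝕜] N)
    (ml : M →ₗ[𝕜] N →ₗ[𝕜] N) (mr : N →ₗ[𝕜] M →ₗ[𝕜] N)
    (nl : N →ₗ[𝕜] M →ₗ[𝕜] M) (nr : M →ₗ[𝕜] N →ₗ[𝕜] M)
    (Br : HomTensor brM brN αM αN ml mr nl nr →ₗ[𝕜]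
      HomTensor brM brN αM αN ml mr nl nr →ₗ[𝕜] HomTensor brM brN αM αN ml mr nl nr)
    (hBr1 : ∀ m n m' n', Br (t1 brM brN αM αN ml mr nl nr m n)
      (t1 brM brN αM αN ml mr nl nr m' n') = t1 brM brN αM αN ml mr nl nr (nr m n) (ml m' n'))
    (hBr2 : ∀ m n n' m', Br (t1 brM brN αM αN ml mr nl nr m n)
      (t2 brM brN αM αN ml mr nl nr n' m') = t1 brM brN αM αN ml mr nl nr (nr m n) (mr n' m'))
    (hBr3 : ∀ n m m' n', Br (t2 brM brN αM αN ml mr nl nr n m)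
      (t1 brM brN αM αN ml mr nl nr m' n') = t1 brM brN αM αN ml mr nl nr (nl n m) (ml m' n'))
    (hBr4 : ∀ n m n' m', Br (t2 brM brN αM αN ml mr nl nr n m)
      (t2 brM brN αM αN ml mr nl nr n' m') = t1 brM brN αM αN ml mr nl nr (nl n m) (mr n' m'))
    (ψ₁ : HomTensor brM brN αM αN ml mr nl nr →ₗ[𝕜] M)
    (hψ₁1 : ∀ m n, ψ₁ (t1 brM brN αM αN ml mr nl nr m n) = nr m n)
    (hψ₁2 : ∀ n m, ψ₁ (t2 brM brN αM αN ml mr nl nr n m) = nl n m)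
    (ψ₂ : HomTensor brM brN αM αN ml mr nl nr →ₗ[𝕜] N)
    (hψ₂1 : ∀ m n, ψ₂ (t1 brM brN αM αN ml mr nl nr m n) = ml m n)
    (hψ₂2 : ∀ n m, ψ₂ (t2 brM brN αM αN ml mr nl nr n m) = mr n m) :
    (∀ z, ψ₁ z = 0 → ∀ w, Br z w = 0 ∧ Br w z = 0) ∧
    (∀ z, ψ₂ z = 0 → ∀ w, Br z w = 0 ∧ Br w z = 0) := by
  have h₁ := HomTensor.bracket_eq_t1_psi₁_psi₂ Br ψ₁ ψ₂ hBr1 hBr2 hBr3 hBr4 hψ₁1 hψ₁2 hψ₂1 hψ₂2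
  have h₂ := HomTensor.bracket_eq_t2_psi₂_psi₁ Br ψ₁ ψ₂ hBr1 hBr2 hBr3 hBr4 hψ₁1 hψ₁2 hψ₂1 hψ₂2
  refine ⟨fun z hz w => ⟨?_, ?_⟩, fun z hz w => ⟨?_, ?_⟩⟩
  · rw [h₁, hz, HomTensor.t1_zero_left]
  · rw [h₂, hz, HomTensor.t2_zero_right]
  · rw [h₂, hz, HomTensor.t2_zero_left]
  · rw [h₁, hz, HomTensor.t1_zero_right]

/-- For Hom-Leibniz algebras `(M,α_M)`, `(N,α_N)` acting compatibly on each other, the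
kernels of `ψ₁ : M∗N → M` and `ψ₂ : M∗N → N` are contained in the center of the
non-abelian tensor product `(M∗N, α_{M∗N})`. -/
theorem ker_psi_central {𝕜 M N : Type*} [Field 𝕜]
    [AddCommGroup M] [Module 𝕜 M] [AddCommGroup N] [Module 𝕜 N]
    (brM : M →ₗ[𝕜] M →ₗ[𝕜] M) (αM : M →ₗ[𝕜] M) (hM : IsHomLeibniz brM αM)
    (brN : N →ₗ[𝕜] N →ₗ[𝕜] N) (αN : N →ₗ[𝕜] N) (hN : IsHomLeibniz brN αN)
    (ml : M →ₗ[𝕜] N →ₗ[𝕜] N) (mr : N →ₗ[𝕜] M →ₗ[𝕜] N)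
    (nl : N →ₗ[𝕜] M →ₗ[𝕜] M) (nr : M →ₗ[𝕜] N →ₗ[𝕜] M)
    (hactM : IsHomLeibnizAction brM αM brN αN ml mr)
    (hactN : IsHomLeibnizAction brN αN brM αM nl nr)
    (hcomp : CompatibleActions brM brN ml mr nl nr)
    (Br : HomTensor brM brN αM αN ml mr nl nr →ₗ[𝕜]
      HomTensor brM brN αM αN ml mr nl nr →ₗ[𝕜] HomTensor brM brN αM αN ml mr nl nr)
    (hBr1 : ∀ m n m' n', Br (t1 brM brN αM αN ml mr nl nr m n)
      (t1 brM brN αM αN ml mr nl nr m' n') = t1 brM brN αM αN ml mr nl nr (nr m n) (ml m' n'))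
    (hBr2 : ∀ m n n' m', Br (t1 brM brN αM αN ml mr nl nr m n)
      (t2 brM brN αM αN ml mr nl nr n' m') = t1 brM brN αM αN ml mr nl nr (nr m n) (mr n' m'))
    (hBr3 : ∀ n m m' n', Br (t2 brM brN αM αN ml mr nl nr n m)
      (t1 brM brN αM αN ml mr nl nr m' n') = t1 brM brN αM αN ml mr nl nr (nl n m) (ml m' n'))
    (hBr4 : ∀ n m n' m', Br (t2 brM brN αM αN ml mr nl nr n m)
      (t2 brM brN αM αN ml mr nl nr n' m') = t1 brM brN αM αN ml mr nl nr (nl n m) (mr n' m'))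
    (ψ₁ : HomTensor brM brN αM αN ml mr nl nr →ₗ[𝕜] M)
    (hψ₁1 : ∀ m n, ψ₁ (t1 brM brN αM αN ml mr nl nr m n) = nr m n)
    (hψ₁2 : ∀ n m, ψ₁ (t2 brM brN αM αN ml mr nl nr n m) = nl n m)
    (ψ₂ : HomTensor brM brN αM αN ml mr nl nr →ₗ[𝕜] N)
    (hψ₂1 : ∀ m n, ψ₂ (t1 brM brN αM αN ml mr nl nr m n) = ml m n)
    (hψ₂2 : ∀ n m, ψ₂ (t2 brM brN αM αN ml mr nl nr n m) = mr n m) :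
    (∀ z, ψ₁ z = 0 → ∀ w, Br z w = 0 ∧ Br w z = 0) ∧
    (∀ z, ψ₂ z = 0 → ∀ w, Br z w = 0 ∧ Br w z = 0) :=
  ker_psi_central_general brM αM brN αN ml mr nl nr Br hBr1 hBr2 hBr3 hBr4 ψ₁ hψ₁1 hψ₁2 ψ₂ hψ₂1 hψ₂2
end

section
/- Let (A,α_A) be a multiplicative Hom-associative algebra. Then 𝕃^α(A) := (A⊗A)/Im(b₃), where b₃(a⊗b⊗c) = ab⊗α_A(c) − α_A(a)⊗bc + ca⊗α_A(b), carries a well-defined Hom-Leibniz algebra structure with bracket [a⊠b, a'⊠b'] = [a,b]⊠[a',b'] (where [x,y] = xy − yx) and endomorphism induced by α_A. -/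
/-!
The commutator `a ⊗ b ↦ ab − ba` kills `Im(b₃)` by Hom-associativity, so it descends to a
linear map `ℓ : 𝕃^α(A) → A`, and the bracket is `[u, v] = ℓ u ⊠ ℓ v`. As `α` is multiplicative,
`ℓ ∘ ᾱ = α ∘ ℓ`, so the Hom-Leibniz identity for `u, v, w` reduces to
`[x,y]⊠α(z) − α(x)⊠[y,z] + [z,x]⊠α(y) = 0` in `𝕃^α(A)` for `x = ℓ u`, `y = ℓ v`, `z = ℓ w`;
this element is the class of `b₃(x⊗y⊗z) − b₃(x⊗z⊗y)`.
-/

open TensorProduct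

namespace HomLeibniz

variable {𝕜 A : Type*} [CommRing 𝕜] [AddCommGroup A] [Module 𝕜 A]
  (mul : A →ₗ[𝕜] A →ₗ[𝕜] A) (α : A →ₗ[𝕜] A)

/-- `Im(b₃) ⊆ A ⊗ A`, so that `𝕃^α(A) = (A ⊗ A) ⧸ boundarySpan mul α`. -/
abbrev boundarySpan : Submodule 𝕜 (A ⊗[𝕜] A) :=
  Submodule.span 𝕜
    {t : A ⊗[𝕜] A | ∃ a b c, t = mul a b ⊗ₜ α c - α a ⊗ₜ mul b c + mul c a ⊗ₜ α b}

lemma boundary_mem (a b c : A) :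
    mul a b ⊗ₜ α c - α a ⊗ₜ mul b c + mul c a ⊗ₜ α b ∈ boundarySpan mul α :=
  Submodule.subset_span ⟨a, b, c, rfl⟩

lemma mk_alpha_tmul_commutator (a b c : A) :
    (Submodule.Quotient.mk (α a ⊗ₜ (mul b c - mul c b)) : (A ⊗[𝕜] A) ⧸ boundarySpan mul α) =
      Submodule.Quotient.mk ((mul a b - mul b a) ⊗ₜ α c)
        - Submodule.Quotient.mk ((mul a c - mul c a) ⊗ₜ α b) := by
  rw [← Submodule.Quotient.mk_sub, Submodule.Quotient.eq]
  convert Submodule.neg_mem _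
    (Submodule.sub_mem _ (boundary_mem mul α a b c) (boundary_mem mul α a c b)) using 1
  simp only [tmul_sub, sub_tmul]
  abel

lemma boundarySpan_le_comap_map (hα : ∀ a b, α (mul a b) = mul (α a) (α b)) :
    boundarySpan mul α ≤ (boundarySpan mul α).comap (map α α) := by
  refine Submodule.span_le.mpr ?_
  rintro t ⟨a, b, c, rfl⟩
  simpa [hα] using boundary_mem mul α (α a) (α b) (α c)

def quotMap (hα : ∀ a b, α (mul a b) = mul (α a) (α b)) :
    (A ⊗[𝕜] A) ⧸ boundarySpan mul α →ₗ[𝕜] (A ⊗[𝕜] A) ⧸ boundarySpan mul α :=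
  (boundarySpan mul α).mapQ _ (map α α) (boundarySpan_le_comap_map mul α hα)

@[simp]
lemma quotMap_mk (hα : ∀ a b, α (mul a b) = mul (α a) (α b)) (x : A ⊗[𝕜] A) :
    quotMap mul α hα (Submodule.Quotient.mk x) = Submodule.Quotient.mk (map α α x) :=
  rfl

def commutator : A ⊗[𝕜] A →ₗ[𝕜] A :=
  lift (mul - mul.flip)

@[simp]
lemma commutator_tmul (a b : A) : commutator mul (a ⊗ₜ b) = mul a b - mul b a := by
  simp [commutator]

lemma commutator_map (hα : ∀ a b, α (mul a b) = mul (α a) (α b)) (x : A ⊗[𝕜] A) :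
    commutator mul (map α α x) = α (commutator mul x) := by
  induction x using TensorProduct.induction_on with
  | zero => simp
  | tmul a b => simp [hα]
  | add x y hx hy => simp [hx, hy]

lemma boundarySpan_le_ker_commutator
    (hassoc : ∀ a b c, mul (α a) (mul b c) = mul (mul a b) (α c)) :
    boundarySpan mul α ≤ LinearMap.ker (commutator mul) := by
  refine Submodule.span_le.mpr ?_
  rintro t ⟨a, b, c, rfl⟩
  simp only [SetLike.mem_coe, LinearMap.mem_ker, map_add, map_sub, commutator_tmul,
    hassoc a b c, hassoc c a b, hassoc b c a]
  abel

def quotCommutator (hassoc : ∀ a b c, mul (α a) (mul b c) = mul (mul a b) (α c)) :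
    (A ⊗[𝕜] A) ⧸ boundarySpan mul α →ₗ[𝕜] A :=
  (boundarySpan mul α).liftQ _ (boundarySpan_le_ker_commutator mul α hassoc)

@[simp]
lemma quotCommutator_mk (hassoc : ∀ a b c, mul (α a) (mul b c) = mul (mul a b) (α c))
    (x : A ⊗[𝕜] A) :
    quotCommutator mul α hassoc (Submodule.Quotient.mk x) = commutator mul x :=
  rfl

lemma quotCommutator_quotMap (hassoc : ∀ a b c, mul (α a) (mul b c) = mul (mul a b) (α c))
    (hα : ∀ a b, α (mul a b) = mul (α a) (α b)) (u : (A ⊗[𝕜] A) ⧸ boundarySpan mul α) :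
    quotCommutator mul α hassoc (quotMap mul α hα u) = α (quotCommutator mul α hassoc u) := by
  induction u using Submodule.Quotient.induction_on with
  | H x => simpa using commutator_map mul α hα x

def bracket (hassoc : ∀ a b c, mul (α a) (mul b c) = mul (mul a b) (α c)) :
    (A ⊗[𝕜] A) ⧸ boundarySpan mul α →ₗ[𝕜] (A ⊗[𝕜] A) ⧸ boundarySpan mul α →ₗ[𝕜]
      (A ⊗[𝕜] A) ⧸ boundarySpan mul α :=
  ((TensorProduct.mk 𝕜 A A).compr₂ (boundarySpan mul α).mkQ).compl₁₂
    (quotCommutator mul α hassoc) (quotCommutator mul α hassoc)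

lemma bracket_apply (hassoc : ∀ a b c, mul (α a) (mul b c) = mul (mul a b) (α c))
    (u v : (A ⊗[𝕜] A) ⧸ boundarySpan mul α) :
    bracket mul α hassoc u v =
      Submodule.Quotient.mk (quotCommutator mul α hassoc u ⊗ₜ quotCommutator mul α hassoc v) :=
  rfl

lemma bracket_homLeibniz (hassoc : ∀ a b c, mul (α a) (mul b c) = mul (mul a b) (α c))
    (hα : ∀ a b, α (mul a b) = mul (α a) (α b)) (u v w : (A ⊗[𝕜] A) ⧸ boundarySpan mul α) :
    bracket mul α hassoc (quotMap mul α hα u) (bracket mul α hassoc v w) =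
      bracket mul α hassoc (bracket mul α hassoc u v) (quotMap mul α hα w)
        - bracket mul α hassoc (bracket mul α hassoc u w) (quotMap mul α hα v) := by
  simp only [bracket_apply, quotCommutator_quotMap, quotCommutator_mk, commutator_tmul]
  exact mk_alpha_tmul_commutator mul α _ _ _

lemma quotMap_bracket (hassoc : ∀ a b c, mul (α a) (mul b c) = mul (mul a b) (α c))
    (hα : ∀ a b, α (mul a b) = mul (α a) (α b)) (u v : (A ⊗[𝕜] A) ⧸ boundarySpan mul α) :
    quotMap mul α hα (bracket mul α hassoc u v) =
      bracket mul α hassoc (quotMap mul α hα u) (quotMap mul α hα v) := by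
  simp only [bracket_apply, quotCommutator_quotMap, quotMap_mk, map_tmul]

end HomLeibniz

open HomLeibniz in
/-- For a multiplicative Hom-associative algebra `(A,α_A)`, the quotient
`𝕃^α(A) = (A ⊗ A)/Im(b₃)`, with `b₃(a⊗b⊗c) = ab⊗α(c) − α(a)⊗bc + ca⊗α(b)`, carries a
well-defined Hom-Leibniz algebra structure with bracket
`[a⊠b, a'⊠b'] = [a,b]⊠[a',b']` (where `[x,y] = xy − yx`) and endomorphism induced by
`α_A`. -/
theorem hochschild_quotient_homLeibniz {𝕜 A : Type*} [Field 𝕜] [AddCommGroup A]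
    [Module 𝕜 A]
    (mul : A →ₗ[𝕜] A →ₗ[𝕜] A) (α : A →ₗ[𝕜] A)
    (hassoc : ∀ a b c, mul (α a) (mul b c) = mul (mul a b) (α c))
    (hα : ∀ a b, α (mul a b) = mul (α a) (α b)) :
    ∃ (Br : ((A ⊗[𝕜] A) ⧸ Submodule.span 𝕜
          {t : A ⊗[𝕜] A | ∃ a b c,
            t = mul a b ⊗ₜ α c - α a ⊗ₜ mul b c + mul c a ⊗ₜ α b}) →ₗ[𝕜]
        ((A ⊗[𝕜] A) ⧸ Submodule.span 𝕜
          {t : A ⊗[𝕜] A | ∃ a b c,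
            t = mul a b ⊗ₜ α c - α a ⊗ₜ mul b c + mul c a ⊗ₜ α b}) →ₗ[𝕜]
        ((A ⊗[𝕜] A) ⧸ Submodule.span 𝕜
          {t : A ⊗[𝕜] A | ∃ a b c,
            t = mul a b ⊗ₜ α c - α a ⊗ₜ mul b c + mul c a ⊗ₜ α b}))
      (ᾱ : ((A ⊗[𝕜] A) ⧸ Submodule.span 𝕜
          {t : A ⊗[𝕜] A | ∃ a b c,
            t = mul a b ⊗ₜ α c - α a ⊗ₜ mul b c + mul c a ⊗ₜ α b}) →ₗ[𝕜]
        ((A ⊗[𝕜] A) ⧸ Submodule.span 𝕜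
          {t : A ⊗[𝕜] A | ∃ a b c,
            t = mul a b ⊗ₜ α c - α a ⊗ₜ mul b c + mul c a ⊗ₜ α b})),
      (∀ a b a' b', Br (Submodule.Quotient.mk (a ⊗ₜ b)) (Submodule.Quotient.mk (a' ⊗ₜ b')) =
        Submodule.Quotient.mk ((mul a b - mul b a) ⊗ₜ (mul a' b' - mul b' a'))) ∧
      (∀ a b, ᾱ (Submodule.Quotient.mk (a ⊗ₜ b)) =
        Submodule.Quotient.mk (α a ⊗ₜ α b)) ∧
      (∀ u v w, Br (ᾱ u) (Br v w) = Br (Br u v) (ᾱ w) - Br (Br u w) (ᾱ v)) ∧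
      (∀ u v, ᾱ (Br u v) = Br (ᾱ u) (ᾱ v)) := by
  refine ⟨bracket mul α hassoc, quotMap mul α hα, fun a b a' b' => ?_, fun a b => ?_,
    bracket_homLeibniz mul α hassoc hα, quotMap_bracket mul α hassoc hα⟩
  · simp [bracket_apply]
  · simp
end
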